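/- arXiv:1612.04504 — 3 statements merged into one kernel-verified Lean document; each statement's English description precedes it below -/
import Mathlib

section
/- Let ω : Fin n → ℂ with |ω(J)| = 1 for all J, let c : Fin n → ℝ be strictly positive with ∑ J, c(J) = 1, and suppose n ≥ 2. Then it is impossible that both |∑ J, ω(J) * c(J)| = 1 and |∑ J, (-1)^J * ω(J) * c(J)| = 1 hold simultaneously. -/
/-! The closed unit disc is strictly convex, so a convex combination with positive weights of
unimodular numbers has modulus one only if they all coincide. Applied to `ω` and to
`J ↦ (-1)^J ω J`, this gives `ω 0 = ω 1` and `ω 0 = -ω 1`, hence `ω 0 = 0`. -/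

open Finset

theorem eq_of_norm_sum_smul_eq {ι V : Type*} [Fintype ι] [NormedAddCommGroup V]
    [NormedSpace ℝ V] [StrictConvexSpace ℝ V] {w : ι → ℝ} {z : ι → V} {r : ℝ}
    (hw : ∀ i, 0 < w i) (hw₁ : ∑ i, w i = 1) (hz : ∀ i, ‖z i‖ ≤ r)
    (h : ‖∑ i, w i • z i‖ = r) (i j : ι) : z i = z j := by
  by_contra hij
  exact (norm_sum_lt_of_strictConvexSpace (fun k _ ↦ (hw k).le) hw₁ (mem_univ i) (mem_univ j)
    hij (hw i).ne' (hw j).ne' fun k _ ↦ hz k).ne h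

theorem stmt_1 (n : ℕ) (hn : 2 ≤ n) (ω : Fin n → ℂ) (c : Fin n → ℝ)
    (hω : ∀ J, ‖ω J‖ = 1)
    (hc : ∀ J, 0 < c J) (hsum : ∑ J, c J = 1) :
    ¬ (‖∑ J, ω J * (c J : ℂ)‖ = 1 ∧
       ‖∑ J : Fin n, (-1 : ℂ) ^ (J : ℕ) * ω J * (c J : ℂ)‖ = 1) := by
  rintro ⟨h₁, h₂⟩
  have rigid (z : Fin n → ℂ) (hz : ∀ J, ‖z J‖ = 1) (h : ‖∑ J, z J * (c J : ℂ)‖ = 1) (i j) :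
      z i = z j :=
    eq_of_norm_sum_smul_eq hc hsum (fun J ↦ (hz J).le)
      (by simpa only [Complex.real_smul, mul_comm] using h) i j
  let i : Fin n := ⟨0, by omega⟩
  let j : Fin n := ⟨1, by omega⟩
  have hsame : ω i = ω j := rigid ω hω h₁ i j
  have hopp : ω i = -ω j := by
    simpa [i, j] using rigid (fun J ↦ (-1) ^ (J : ℕ) * ω J) (by simp [hω]) h₂ i j
  have hzero : ω i = 0 := by linear_combination (hsame + hopp) / 2
  simpa [hzero] using hω i
end

section
/- There is no unit vector ψ ∈ ℂ² ⊗ ℂ² ⊗ ℂ² ⊗ ℂ² such that for every 2-element subset S of the four tensor factors, the reduced density matrix obtained by tracing out the complement of S equals (1/4)·I₄. -/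
/-!
For a state `ψ` of `n` qubits let `P(T) = Tr ρ_T²` be the purity of its reduction to the factors
in `T`. Expanding `P(T)` as a sum over pairs of basis vectors `(v, x)` and summing over `T` with
sign `(-1)^|T|`, the contribution of `(v, x)` cancels as soon as `v` and `x` agree at some site;
the surviving pairs `x = v̄` (bitwise complement) add up to `|∑ᵥ ± ψ(v) ψ(v̄)|²`. Hence
`∑_T (-1)^|T| P(T) ≥ 0`. For a 4-qubit state all of whose two-site reductions are maximally
mixed, `P(T) = 2^(-min(|T|, 4 - |T|))`, and the alternating sum is
`1 - 4/2 + 6/4 - 4/2 + 1 = -1/2`, a contradiction.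
-/

/-- The reduced density matrix of the 4-valent tensor `ψ` on the two tensor
factors `i, j` (tracing out the other two factors). -/
noncomputable def redMat {A : Type*} [Fintype A] [DecidableEq A]
    (ψ : (Fin 4 → A) → ℂ) (i j : Fin 4) : Matrix (A × A) (A × A) ℂ :=
  fun p q => ∑ v : Fin 4 → A,
    if v i = p.1 ∧ v j = p.2 then
      ψ v * (starRingEnd ℂ) (ψ (Function.update (Function.update v i q.1) j q.2))
    else 0

namespace Multipartite

open Finset Function ComplexConjugate

variable {ι : Type*}

def bitFlip (v : ι → Fin 2) : ι → Fin 2 := fun i => v i + 1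

lemma eq_bitFlip_of_forall_ne {v x : ι → Fin 2} (h : ∀ i, v i ≠ x i) : x = bitFlip v := by
  funext i
  have : ∀ a b : Fin 2, a ≠ b → b = a + 1 := by decide
  exact this _ _ (h i)

noncomputable def spinSign [Fintype ι] (v : ι → Fin 2) : ℂ := ∏ i, (-1) ^ (v i : ℕ)

variable [DecidableEq ι]

lemma piecewise_bitFlip (T : Finset ι) (v : ι → Fin 2) :
    T.piecewise v (bitFlip v) = bitFlip (T.piecewise (bitFlip v) v) := by
  funext k
  by_cases hk : k ∈ T <;> simp [hk, bitFlip, add_assoc, Fin.reduceAdd]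

lemma update_update_eq_piecewise_pair {α : Type*} {i j : ι} (hij : i ≠ j) (v x : ι → α) :
    update (update v i (x i)) j (x j) = ({i, j} : Finset ι).piecewise x v := by
  rw [piecewise_insert, piecewise_singleton, update_comm hij.symm]

variable [Fintype ι]

lemma spinSign_mul_spinSign_piecewise (T : Finset ι) (v : ι → Fin 2) :
    spinSign v * spinSign (T.piecewise (bitFlip v) v) = (-1) ^ #T := by
  have hflip : ∀ a : Fin 2, (-1 : ℂ) ^ (a : ℕ) * (-1) ^ ((a + 1 : Fin 2) : ℕ) = -1 := by
    intro a; fin_cases a <;> simp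
  have hsite : ∀ k, (-1 : ℂ) ^ (v k : ℕ) * (-1) ^ (T.piecewise (bitFlip v) v k : ℕ) =
      if k ∈ T then -1 else 1 := by
    intro k
    by_cases hk : k ∈ T <;> simp [piecewise, hk, bitFlip, hflip, ← pow_add, ← two_mul]
  rw [spinSign, spinSign, ← prod_mul_distrib, prod_congr rfl fun k _ => hsite k, prod_ite_mem,
    univ_inter, prod_const]

lemma bijective_piecewise_bitFlip (v : ι → Fin 2) :
    Bijective fun T : Finset ι => T.piecewise (bitFlip v) v := by
  rw [Fintype.bijective_iff_injective_and_card]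
  refine ⟨fun T T' h => ?_, by simp⟩
  ext k
  have hk := congrFun h k
  have hne : v k + 1 ≠ v k := by
    have : ∀ a : Fin 2, a + 1 ≠ a := by decide
    exact this _
  by_cases h1 : k ∈ T <;> by_cases h2 : k ∈ T' <;> simp_all [bitFlip]

lemma sum_neg_one_pow_card_mul_piecewise_eq_zero {α β : Type*} [CommRing β] (g : (ι → α) → β)
    {v x : ι → α} {i : ι} (hi : v i = x i) :
    ∑ T : Finset ι, (-1 : β) ^ #T * (g (T.piecewise x v) * g (T.piecewise v x)) = 0 := by
  rw [← powerset_univ, ← insert_erase (mem_univ i), sum_powerset_insert (notMem_erase i univ),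
    ← sum_add_distrib]
  refine sum_eq_zero fun T hT => ?_
  have hiT : i ∉ T := fun h => notMem_erase i univ (mem_powerset.1 hT h)
  have hx : (insert i T).piecewise x v = T.piecewise x v := by
    rw [piecewise_insert, ← hi, update_eq_self_iff, piecewise_eq_of_notMem _ _ _ hiT]
  have hv : (insert i T).piecewise v x = T.piecewise v x := by
    rw [piecewise_insert, hi, update_eq_self_iff, piecewise_eq_of_notMem _ _ _ hiT]
  rw [hx, hv, card_insert_of_notMem hiT, pow_succ]
  ring

/-- For normalised `ψ`, `purity ψ T = Tr ρ_T²`, where `ρ_T` is the reduced density matrix of `ψ`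
on the factors in `T`. -/
noncomputable def purity {α : Type*} [Fintype α] (ψ : (ι → α) → ℂ) (T : Finset ι) : ℂ :=
  ∑ v, ∑ x, ψ v * ψ x * conj (ψ (T.piecewise x v)) * conj (ψ (T.piecewise v x))

lemma purity_empty {α : Type*} [Fintype α] (ψ : (ι → α) → ℂ) :
    purity ψ ∅ = ((∑ v, ‖ψ v‖ ^ 2 : ℝ) : ℂ) ^ 2 := by
  simp only [purity, piecewise_empty, Complex.ofReal_sum, sq, sum_mul_sum]
  refine sum_congr rfl fun v _ => sum_congr rfl fun x _ => ?_
  rw [← sq, ← sq, Complex.ofReal_pow, Complex.ofReal_pow, ← Complex.mul_conj', ← Complex.mul_conj']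
  ring

lemma purity_compl {α : Type*} [Fintype α] (ψ : (ι → α) → ℂ) (T : Finset ι) :
    purity ψ Tᶜ = purity ψ T := by
  simp only [purity, piecewise_compl]
  exact sum_congr rfl fun _ _ => sum_congr rfl fun _ _ => by ring

/-- Up to a global phase, `⟨ψ̄| σ_y^{⊗n} |ψ⟩`. -/
noncomputable def spinFlipOverlap (ψ : (ι → Fin 2) → ℂ) : ℂ :=
  ∑ v, spinSign v * ψ v * ψ (bitFlip v)

lemma conj_spinFlipOverlap (ψ : (ι → Fin 2) → ℂ) :
    conj (spinFlipOverlap ψ) = ∑ u, spinSign u * (conj (ψ u) * conj (ψ (bitFlip u))) := by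
  have hsign : ∀ u : ι → Fin 2, conj (spinSign u) = spinSign u := by
    simp [spinSign, map_prod]
  simp only [spinFlipOverlap, map_sum, map_mul, hsign, mul_assoc]

lemma sum_neg_one_pow_card_mul_conj_piecewise_bitFlip (ψ : (ι → Fin 2) → ℂ) (v : ι → Fin 2) :
    ∑ T : Finset ι, (-1 : ℂ) ^ #T *
        (conj (ψ (T.piecewise (bitFlip v) v)) * conj (ψ (T.piecewise v (bitFlip v)))) =
      spinSign v * conj (spinFlipOverlap ψ) := by
  rw [conj_spinFlipOverlap, mul_sum]
  refine Fintype.sum_bijective _ (bijective_piecewise_bitFlip v) _ _ fun T => ?_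
  rw [piecewise_bitFlip, ← spinSign_mul_spinSign_piecewise T v]
  ring

theorem sum_neg_one_pow_card_mul_purity (ψ : (ι → Fin 2) → ℂ) :
    ∑ T : Finset ι, (-1 : ℂ) ^ #T * purity ψ T = Complex.normSq (spinFlipOverlap ψ) := by
  have hv : ∀ v, ∑ x, ψ v * ψ x * ∑ T : Finset ι, (-1 : ℂ) ^ #T *
      (conj (ψ (T.piecewise x v)) * conj (ψ (T.piecewise v x))) =
        spinSign v * ψ v * ψ (bitFlip v) * conj (spinFlipOverlap ψ) := by
    intro v
    rw [sum_eq_single (bitFlip v), sum_neg_one_pow_card_mul_conj_piecewise_bitFlip]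
    · ring
    · intro x _ hx
      obtain ⟨i, hi⟩ : ∃ i, v i = x i := by
        by_contra! h
        exact hx (eq_bitFlip_of_forall_ne h)
      exact mul_eq_zero_of_right _ (sum_neg_one_pow_card_mul_piecewise_eq_zero (conj ∘ ψ) hi)
    · simp
  calc ∑ T : Finset ι, (-1 : ℂ) ^ #T * purity ψ T
      = ∑ v, ∑ x, ψ v * ψ x * ∑ T : Finset ι, (-1 : ℂ) ^ #T *
          (conj (ψ (T.piecewise x v)) * conj (ψ (T.piecewise v x))) := by
        simp only [purity, mul_sum]
        rw [sum_comm]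
        refine sum_congr rfl fun v _ => ?_
        rw [sum_comm]
        exact sum_congr rfl fun x _ => sum_congr rfl fun T _ => by ring
    _ = spinFlipOverlap ψ * conj (spinFlipOverlap ψ) := by
        simp only [hv, spinFlipOverlap, sum_mul]
    _ = Complex.normSq (spinFlipOverlap ψ) := Complex.mul_conj _

lemma trace_mul_self_of_eq_sum_ite {V K : Type*} [Fintype V] [Fintype K] [DecidableEq K]
    (ψ : V → ℂ) (key : V → K) (r : V → K → V) (ρ : Matrix K K ℂ)
    (hρ : ∀ p q, ρ p q = ∑ v, if key v = p then ψ v * conj (ψ (r v q)) else 0) :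
    (ρ * ρ).trace = ∑ v, ∑ x, ψ v * ψ x * conj (ψ (r v (key x))) * conj (ψ (r x (key v))) := by
  simp only [Matrix.trace, Matrix.diag, Matrix.mul_apply, hρ, sum_mul_sum]
  conv_lhs => enter [2, p]; rw [sum_comm]
  rw [sum_comm]
  refine sum_congr rfl fun v _ => ?_
  conv_lhs => enter [2, p]; rw [sum_comm]
  rw [sum_comm]
  refine sum_congr rfl fun x _ => ?_
  simp only [ite_mul, mul_ite, zero_mul, mul_zero, sum_ite_eq, mem_univ, if_true]
  ring

def partialTraceRight {m n R : Type*} [Fintype n] [AddCommMonoid R]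
    (ρ : Matrix (m × n) (m × n) R) : Matrix m m R :=
  Matrix.of fun a b => ∑ c, ρ (a, c) (b, c)

section ReducedMatrix

variable {A : Type*} [Fintype A] [DecidableEq A]

lemma trace_redMat_mul_self (ψ : (Fin 4 → A) → ℂ) {i j : Fin 4} (hij : i ≠ j) :
    (redMat ψ i j * redMat ψ i j).trace = purity ψ {i, j} := by
  rw [trace_mul_self_of_eq_sum_ite ψ (fun v => (v i, v j))
    (fun v q => update (update v i q.1) j q.2) _ fun p q => by simp only [redMat, Prod.ext_iff]]
  simp only [update_update_eq_piecewise_pair hij, purity]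

lemma trace_partialTraceRight_redMat_mul_self (ψ : (Fin 4 → A) → ℂ) {i j : Fin 4}
    (hij : i ≠ j) :
    (partialTraceRight (redMat ψ i j) * partialTraceRight (redMat ψ i j)).trace =
      purity ψ {i} := by
  have hρ : ∀ a b, partialTraceRight (redMat ψ i j) a b =
      ∑ v, if v i = a then ψ v * conj (ψ (update v i b)) else 0 := by
    intro a b
    simp only [partialTraceRight, Matrix.of_apply, redMat]
    rw [sum_comm]
    refine sum_congr rfl fun v _ => ?_
    have hupd : update (update v i b) j (v j) = update v i b :=
      update_eq_self_iff.2 (update_of_ne hij.symm b v).symm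
    by_cases ha : v i = a <;> simp [ha, hupd]
  rw [trace_mul_self_of_eq_sum_ite ψ (fun v => v i) (fun v b => update v i b) _ hρ]
  simp only [← piecewise_singleton, purity]

end ReducedMatrix

lemma purity_eq_of_redMat_eq {ψ : (Fin 4 → Fin 2) → ℂ} (hnorm : ∑ v, ‖ψ v‖ ^ 2 = 1)
    (hred : ∀ i j : Fin 4, i ≠ j → redMat ψ i j = (4 : ℂ)⁻¹ • 1) (T : Finset (Fin 4)) :
    purity ψ T = 2⁻¹ ^ min #T (4 - #T) := by
  have hsmall : ∀ T : Finset (Fin 4), #T ≤ 2 → purity ψ T = 2⁻¹ ^ #T := by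
    intro T hT
    obtain h | h | h : #T = 0 ∨ #T = 1 ∨ #T = 2 := by omega
    · rw [card_eq_zero.1 h, purity_empty, hnorm]
      norm_num
    · obtain ⟨i, rfl⟩ := card_eq_one.1 h
      obtain ⟨j, hji⟩ := exists_ne i
      rw [← trace_partialTraceRight_redMat_mul_self ψ hji.symm, hred i j hji.symm]
      norm_num [Matrix.trace, Matrix.mul_apply, partialTraceRight, Matrix.one_apply]
    · obtain ⟨i, j, hij, rfl⟩ := card_eq_two.1 h
      rw [h, ← trace_redMat_mul_self ψ hij, hred i j hij]
      norm_num
  rcases le_or_gt #T 2 with hT | hT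
  · rw [hsmall T hT, min_eq_left (by omega)]
  · have hc : #Tᶜ = 4 - #T := by simp [card_compl]
    rw [← purity_compl, hsmall Tᶜ (by omega), hc, min_eq_right (by omega)]

lemma sum_neg_one_pow_card_mul_inv_two_pow_min :
    ∑ T : Finset (Fin 4), (-1 : ℂ) ^ #T * 2⁻¹ ^ min #T (4 - #T) = -2⁻¹ := by
  rw [← powerset_univ, sum_powerset_apply_card (fun k => (-1 : ℂ) ^ k * 2⁻¹ ^ min k (4 - k))]
  norm_num [sum_range_succ, Nat.choose]

end Multipartite

/-- There is no 4-qubit perfect tensor (absolutely maximally entangled state). -/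
theorem stmt_8 :
    ¬ ∃ ψ : (Fin 4 → Fin 2) → ℂ,
      (∑ v, ‖ψ v‖ ^ 2 = 1) ∧
      ∀ i j : Fin 4, i ≠ j →
        redMat ψ i j = ((4 : ℂ))⁻¹ • (1 : Matrix (Fin 2 × Fin 2) (Fin 2 × Fin 2) ℂ) := by
  rintro ⟨ψ, hnorm, hred⟩
  have h := Multipartite.sum_neg_one_pow_card_mul_purity ψ
  simp only [Multipartite.purity_eq_of_redMat_eq hnorm hred,
    Multipartite.sum_neg_one_pow_card_mul_inv_two_pow_min] at h
  have hneg : Complex.normSq (Multipartite.spinFlipOverlap ψ) = -2⁻¹ :=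
    Complex.ofReal_injective (by push_cast; exact h.symm)
  linarith [Complex.normSq_nonneg (Multipartite.spinFlipOverlap ψ)]
end

section
/- Let q > 2 be a prime power, α ∈ 𝔽_q \ {0,1}, and let C ⊆ 𝔽_q⁴ be the code generated by (1,0,1,1) and (0,1,1,α). Define ψ ∈ (ℂ^q)^{⊗4} by ψ = (1/q) ∑_{c ∈ C} |c₁,c₂,c₃,c₄⟩. Then ψ is a unit vector and for every pair of coordinates {i,j} ⊂ {1,2,3,4}, the reduced density matrix of ψ on factors {i,j} equals (1/q²)·I. -/
open Classical in
/-- The uniform superposition `(1/q) ∑_{c ∈ C} |c⟩` over the code generated by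
`(1,0,1,1)` and `(0,1,1,α)`. -/
noncomputable def codeState (F : Type*) [Field F] [Fintype F] (α : F) :
    (Fin 4 → F) → ℂ :=
  fun v => if ∃ x y : F, v = fun i => x * (![1, 0, 1, 1] i) + y * (![0, 1, 1, α] i)
    then ((Fintype.card F : ℂ))⁻¹ else 0

/-!
Any two coordinates of a codeword of `C = span{(1,0,1,1), (0,1,1,α)}` determine it and take
every value in `𝔽_q²`, because all `2 × 2` minors `1, 1, α, -1, -1, α - 1` of the generator
matrix are nonzero. Hence, in the reduced density matrix on `{i, j}`, the entry `(p, q)` only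
sees the unique codeword `u` with `(u_i, u_j) = p`, and the word obtained from `u` by writing
`q` into the coordinates `i, j` is a codeword only if `q = p`, since it still agrees with `u`
on the two remaining coordinates. The normalisation is the trace of that matrix.
-/

open Function

/-- Orthogonal array of strength 2 and index 1: every pair of coordinates takes every value
exactly once on `C` (for codes, the MDS property in dimension 2). -/
def IsOrthogonalArray {ι A : Type*} (C : Set (ι → A)) : Prop :=
  ∀ i j, i ≠ j → ∀ a b : A, ∃! v, v ∈ C ∧ v i = a ∧ v j = b

theorem IsOrthogonalArray.eq_of_apply_eq {ι A : Type*} {C : Set (ι → A)}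
    (hC : IsOrthogonalArray C) {k l : ι} (hkl : k ≠ l) {v w : ι → A}
    (hv : v ∈ C) (hw : w ∈ C) (hk : v k = w k) (hl : v l = w l) : v = w :=
  (hC k l hkl (w k) (w l)).unique ⟨hv, hk, hl⟩ ⟨hw, rfl, rfl⟩

theorem Fin.exists_pair_disjoint_of_ne (i j : Fin 4) (hij : i ≠ j) :
    ∃ k l : Fin 4, k ≠ l ∧ k ≠ i ∧ k ≠ j ∧ l ≠ i ∧ l ≠ j := by
  revert i j; decide

theorem IsOrthogonalArray.update_update_mem_iff {A : Type*} [DecidableEq A]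
    {C : Set (Fin 4 → A)} (hC : IsOrthogonalArray C) {u : Fin 4 → A} (hu : u ∈ C)
    {i j : Fin 4} (hij : i ≠ j) (a b : A) :
    update (update u i a) j b ∈ C ↔ a = u i ∧ b = u j := by
  constructor
  · intro hw
    obtain ⟨k, l, hkl, hki, hkj, hli, hlj⟩ := Fin.exists_pair_disjoint_of_ne i j hij
    have hwu := hC.eq_of_apply_eq hkl hw hu
      (by rw [update_of_ne hkj, update_of_ne hki]) (by rw [update_of_ne hlj, update_of_ne hli])
    constructor
    · simpa [update_of_ne hij] using congrFun hwu i
    · simpa using congrFun hwu j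
  · rintro ⟨rfl, rfl⟩
    simpa using hu

section ReducedMatrix

variable {A : Type*} [Fintype A] [DecidableEq A]

theorem redMat_indicator_const {C : Set (Fin 4 → A)} (hC : IsOrthogonalArray C) (c : ℂ)
    {i j : Fin 4} (hij : i ≠ j) :
    redMat (C.indicator fun _ => c) i j
      = (c * starRingEnd ℂ c) • (1 : Matrix (A × A) (A × A) ℂ) := by
  classical
  ext p q
  obtain ⟨u, ⟨hu, hui, huj⟩, -⟩ := hC i j hij p.1 p.2
  have hsingle : redMat (C.indicator fun _ => c) i j p q
      = c * starRingEnd ℂ (C.indicator (fun _ => c) (update (update u i q.1) j q.2)) := by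
    rw [redMat, Finset.sum_eq_single u, if_pos ⟨hui, huj⟩, Set.indicator_of_mem hu]
    · intro v _ hvu
      by_cases hv : v ∈ C
      · rw [if_neg fun h => hvu (hC.eq_of_apply_eq hij hv hu (h.1.trans hui.symm)
          (h.2.trans huj.symm))]
      · rw [Set.indicator_of_notMem hv, zero_mul, ite_self]
    · simp
  rw [hsingle, Set.indicator_apply, hC.update_update_mem_iff hu hij, hui, huj,
    Matrix.smul_apply, Matrix.one_apply, ← Prod.ext_iff]
  by_cases hpq : p = q
  · simp [hpq]
  · simp [hpq, Ne.symm hpq]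

theorem trace_redMat (ψ : (Fin 4 → A) → ℂ) (i j : Fin 4) :
    (redMat ψ i j).trace = ((∑ v, ‖ψ v‖ ^ 2 : ℝ) : ℂ) := by
  have hdiag : ∀ v : Fin 4 → A,
      ∑ p : A × A, (if v i = p.1 ∧ v j = p.2 then
        ψ v * starRingEnd ℂ (ψ (update (update v i p.1) j p.2)) else 0)
        = ψ v * starRingEnd ℂ (ψ v) := by
    intro v
    rw [Fintype.sum_eq_single (v i, v j) (fun p hp => if_neg fun h => hp (Prod.ext h.1 h.2).symm)]
    simp
  simp only [Matrix.trace, Matrix.diag, redMat]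
  rw [Finset.sum_comm, Finset.sum_congr rfl fun v _ => hdiag v]
  push_cast
  simp [Complex.mul_conj, Complex.normSq_eq_norm_sq]

end ReducedMatrix

section Code

variable {F : Type*} [Field F]

def codeword (α : F) (m : F × F) : Fin 4 → F :=
  fun i => m.1 * ![1, 0, 1, 1] i + m.2 * ![0, 1, 1, α] i

theorem codeword_pair_injective {α : F} (hα0 : α ≠ 0) (hα1 : α ≠ 1) {i j : Fin 4}
    (hij : i ≠ j) : Injective fun m => (codeword α m i, codeword α m j) := by
  rintro ⟨x, y⟩ ⟨x', y'⟩ h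
  fin_cases i <;> fin_cases j <;> simp [codeword] at hij h ⊢ <;> grind

theorem isOrthogonalArray_range_codeword [Finite F] {α : F} (hα0 : α ≠ 0) (hα1 : α ≠ 1) :
    IsOrthogonalArray (Set.range (codeword α)) := by
  intro i j hij a b
  have hinj := codeword_pair_injective hα0 hα1 hij
  obtain ⟨m, hm⟩ := Finite.surjective_of_injective hinj (a, b)
  refine ⟨codeword α m, ⟨⟨m, rfl⟩, congrArg Prod.fst hm, congrArg Prod.snd hm⟩, ?_⟩
  rintro _ ⟨⟨m', rfl⟩, hi, hj⟩
  rw [hinj (hm.trans (Prod.ext hi.symm hj.symm))]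

theorem codeState_eq_indicator [Fintype F] (α : F) :
    codeState F α = (Set.range (codeword α)).indicator fun _ => (Fintype.card F : ℂ)⁻¹ := by
  classical
  funext v
  simp only [codeState, Set.indicator_apply, Set.mem_range, Prod.exists, eq_comm]
  rfl

end Code

theorem stmt_10_general (F : Type*) [Field F] [Fintype F] [DecidableEq F]
    (α : F) (hα0 : α ≠ 0) (hα1 : α ≠ 1) :
    (∑ v, ‖codeState F α v‖ ^ 2 = 1) ∧
    ∀ i j : Fin 4, i ≠ j →
      redMat (codeState F α) i j
        = (((Fintype.card F : ℂ)) ^ 2)⁻¹ • (1 : Matrix (F × F) (F × F) ℂ) := by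
  have hred : ∀ i j : Fin 4, i ≠ j → redMat (codeState F α) i j
      = (((Fintype.card F : ℂ)) ^ 2)⁻¹ • (1 : Matrix (F × F) (F × F) ℂ) := by
    intro i j hij
    rw [codeState_eq_indicator,
      redMat_indicator_const (isOrthogonalArray_range_codeword hα0 hα1) _ hij]
    simp [sq]
  refine ⟨Complex.ofReal_injective ?_, hred⟩
  have hcard : (Fintype.card F : ℂ) ≠ 0 := by simp
  rw [← trace_redMat _ 0 1, hred 0 1 (by decide), Matrix.trace_smul, Matrix.trace_one,
    Fintype.card_prod, smul_eq_mul]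
  push_cast
  field_simp

theorem stmt_10 (F : Type*) [Field F] [Fintype F] [DecidableEq F]
    (hq : 2 < Fintype.card F) (α : F) (hα0 : α ≠ 0) (hα1 : α ≠ 1) :
    (∑ v, ‖codeState F α v‖ ^ 2 = 1) ∧
    ∀ i j : Fin 4, i ≠ j →
      redMat (codeState F α) i j
        = (((Fintype.card F : ℂ)) ^ 2)⁻¹ • (1 : Matrix (F × F) (F × F) ℂ) :=
  stmt_10_general F α hα0 hα1
end
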